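/- Consider the double integrator ṗ = v, v̇ = u with u ∈ [−1, 1] and S = {(p,v) : p ≥ −p₁ + v²/2, p ≤ p₁ − v²/2}. At the corner point (0, √(2p₁)) ∈ ∂S (intersection of the two parabolas, where the boundary is not differentiable), the tangent cone condition holds in both time directions: there exists u ∈ [−1,1] with f((0,√(2p₁)), u) ∈ T_S((0,√(2p₁))) and there exists u' ∈ [−1,1] with −f((0,√(2p₁)), u') ∈ T_{(int S)ᶜ}((0,√(2p₁))). -/

import Mathlib

open Filter Metric Set

/-- The Bouligand tangent cone to a set `A` at `x`:
`T_A(x) = {z | liminf_{τ→0⁺} dist(x + τz, A)/τ = 0}`. -/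
noncomputable def bouligandTangentCone {E : Type*} [NormedAddCommGroup E] [NormedSpace ℝ E]
    (A : Set E) (x : E) : Set E :=
  {z | Filter.liminf (fun τ : ℝ => Metric.infDist (x + τ • z) A / τ)
      (nhdsWithin 0 (Set.Ioi 0)) = 0}

/-- For the double integrator with `S = {(p,v) : −p₁ + v²/2 ≤ p ≤ p₁ − v²/2}`, at the
corner point `(0, √(2p₁))` of `∂S` the tangent cone condition holds in both time
directions: some admissible `u` gives `f(x₀,u) = (v₀, u) ∈ T_S(x₀)`, and some
admissible `u'` gives `−f(x₀,u') ∈ T_{(int S)ᶜ}(x₀)`. -/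
theorem double_integrator_corner_tangent_cones (p₁ : ℝ) (hp₁ : 0 < p₁) :
    (∃ u ∈ Set.Icc (-1 : ℝ) 1,
      ((Real.sqrt (2 * p₁), u) : ℝ × ℝ) ∈
        bouligandTangentCone
          {x : ℝ × ℝ | -p₁ + x.2 ^ 2 / 2 ≤ x.1 ∧ x.1 ≤ p₁ - x.2 ^ 2 / 2}
          ((0 : ℝ), Real.sqrt (2 * p₁))) ∧
    (∃ u' ∈ Set.Icc (-1 : ℝ) 1,
      ((-(Real.sqrt (2 * p₁)), -u') : ℝ × ℝ) ∈
        bouligandTangentCone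
          (interior {x : ℝ × ℝ | -p₁ + x.2 ^ 2 / 2 ≤ x.1 ∧ x.1 ≤ p₁ - x.2 ^ 2 / 2})ᶜ
          ((0 : ℝ), Real.sqrt (2 * p₁))) := by
  set s := Real.sqrt (2 * p₁) with hsdef
  have hs0 : 0 < s := Real.sqrt_pos.mpr (by linarith)
  have hs2 : s ^ 2 = 2 * p₁ := Real.sq_sqrt (by linarith)
  set S : Set (ℝ × ℝ) := {x : ℝ × ℝ | -p₁ + x.2 ^ 2 / 2 ≤ x.1 ∧ x.1 ≤ p₁ - x.2 ^ 2 / 2}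
    with hSdef
  constructor
  · refine ⟨-1, ⟨le_refl _, by norm_num⟩, ?_⟩
    show Filter.liminf _ _ = 0
    have key : Tendsto
        (fun τ : ℝ => Metric.infDist (((0 : ℝ), s) + τ • ((s, -1) : ℝ × ℝ)) S / τ)
        (nhdsWithin 0 (Set.Ioi 0)) (nhds 0) := by
      have hlow : ∀ᶠ τ : ℝ in nhdsWithin 0 (Set.Ioi 0),
          (0 : ℝ) ≤ Metric.infDist (((0 : ℝ), s) + τ • ((s, -1) : ℝ × ℝ)) S / τ := by
        filter_upwards [self_mem_nhdsWithin] with τ (hτ : 0 < τ)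
        exact div_nonneg Metric.infDist_nonneg hτ.le
      have hup : ∀ᶠ τ : ℝ in nhdsWithin 0 (Set.Ioi 0),
          Metric.infDist (((0 : ℝ), s) + τ • ((s, -1) : ℝ × ℝ)) S / τ ≤ τ / 2 := by
        have hmem : Set.Ioo (0 : ℝ) (2 * s) ∈ nhdsWithin 0 (Set.Ioi 0) :=
          Ioo_mem_nhdsGT_of_mem ⟨le_refl 0, by linarith⟩
        filter_upwards [hmem] with τ hτ
        obtain ⟨hτ0, hτ2s⟩ := hτ
        have hy : ((τ * s - τ ^ 2 / 2, s - τ) : ℝ × ℝ) ∈ S := by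
          constructor
          · show -p₁ + (s - τ) ^ 2 / 2 ≤ τ * s - τ ^ 2 / 2
            nlinarith
          · show τ * s - τ ^ 2 / 2 ≤ p₁ - (s - τ) ^ 2 / 2
            nlinarith
        have hdist : Metric.infDist (((0 : ℝ), s) + τ • ((s, -1) : ℝ × ℝ)) S ≤ τ ^ 2 / 2 := by
          have h1 := Metric.infDist_le_dist_of_mem (x := ((0 : ℝ), s) + τ • ((s, -1) : ℝ × ℝ)) hy
          have heq : dist (((0 : ℝ), s) + τ • ((s, -1) : ℝ × ℝ))
              ((τ * s - τ ^ 2 / 2, s - τ) : ℝ × ℝ) = τ ^ 2 / 2 := by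
            simp only [Prod.smul_mk, Prod.mk_add_mk, Prod.dist_eq, smul_eq_mul]
            rw [Real.dist_eq, Real.dist_eq]
            have e1 : (0 : ℝ) + τ * s - (τ * s - τ ^ 2 / 2) = τ ^ 2 / 2 := by ring
            have e2 : s + τ * (-1) - (s - τ) = 0 := by ring
            rw [e1, e2, abs_zero, abs_of_nonneg (by positivity)]
            simp [max_eq_left (by positivity : (0:ℝ) ≤ τ ^ 2 / 2)]
          rw [heq] at h1
          exact h1
        calc Metric.infDist (((0 : ℝ), s) + τ • ((s, -1) : ℝ × ℝ)) S / τ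
            ≤ (τ ^ 2 / 2) / τ := by gcongr
          _ = τ / 2 := by field_simp
      have hh : Tendsto (fun τ : ℝ => τ / 2) (nhdsWithin 0 (Set.Ioi 0)) (nhds 0) := by
        have : Tendsto (fun τ : ℝ => τ / 2) (nhds 0) (nhds (0 / 2)) :=
          tendsto_id.div_const 2
        simpa using this.mono_left nhdsWithin_le_nhds
      exact tendsto_of_tendsto_of_tendsto_of_le_of_le' tendsto_const_nhds hh hlow hup
    exact key.liminf_eq
  · refine ⟨1, ⟨by norm_num, le_refl _⟩, ?_⟩
    show Filter.liminf _ _ = 0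
    have heq : ∀ᶠ τ : ℝ in nhdsWithin 0 (Set.Ioi 0),
        Metric.infDist (((0 : ℝ), s) + τ • ((-s, -1) : ℝ × ℝ)) (interior S)ᶜ / τ = 0 := by
      filter_upwards [self_mem_nhdsWithin] with τ (hτ : 0 < τ)
      have hmem : (((0 : ℝ), s) + τ • ((-s, -1) : ℝ × ℝ)) ∈ (interior S)ᶜ := by
        intro hint
        have hinS : (((0 : ℝ), s) + τ • ((-s, -1) : ℝ × ℝ)) ∈ S := interior_subset hint
        have h1 : -p₁ + (s + τ * (-1)) ^ 2 / 2 ≤ (0 : ℝ) + τ * (-s) := hinS.1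
        nlinarith
      rw [Metric.infDist_zero_of_mem hmem, zero_div]
    rw [Filter.liminf_congr heq]
    exact Filter.liminf_const 0
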